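/- Let q be a nondegenerate symmetric bilinear form on a finite-dimensional real vector space V, with signature (3, n), n ≥ 0. Let S ⊂ V be a countable (or finite) set of vectors z with q(z,z) < 0. Fix a vector x with q(x,x) > 0. Then there exists a 3-dimensional subspace W ⊂ V containing x such that q|_W is positive definite and W is not orthogonal to any z ∈ S (i.e., no z ∈ S lies in W^⊥). -/

import Mathlib

/-!
Since `q` is positive definite on a 3-dimensional subspace `P`, some nonzero `h₀ ∈ P` is
orthogonal to `x`, and `q h₀ h₀ > 0`. Let `g₁, …, g_d` be the projections onto `x^⊥` of a basis
of `V` and consider the curve `c t = h₀ + ∑ tⁱ gᵢ` in `x^⊥`. For `z ∈ S` with `q x z = 0`,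
nondegeneracy and `z ≠ 0` make `t ↦ q (c t) z` a nonzero polynomial, with finitely many roots.
As `S` is countable and `q (c t) (c t) > 0` on a neighbourhood of `0`, some `u = c t` is positive,
orthogonal to `x` and to no `z ∈ S ∩ x^⊥`. A nonzero `v ∈ P` orthogonal to `x` and `u` is positive,
and `W = span {x, u, v}` works: `z ∈ S` is detected by `x`, or else by `u`.
-/

/-- A symmetric bilinear form `q` on a real vector space has signature `(p, n)`. -/
def IsSignature {V : Type*} [AddCommGroup V] [Module ℝ V]
    (q : V →ₗ[ℝ] V →ₗ[ℝ] ℝ) (p n : ℕ) : Prop :=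
  ∃ b : Module.Basis (Fin p ⊕ Fin n) ℝ V,
    (∀ i j, i ≠ j → q (b i) (b j) = 0) ∧
    (∀ i : Fin p, q (b (Sum.inl i)) (b (Sum.inl i)) = 1) ∧
    (∀ j : Fin n, q (b (Sum.inr j)) (b (Sum.inr j)) = -1)

open Module Polynomial Submodule

lemma Submodule.exists_mem_ne_zero_forall_eq_zero {K V : Type*} [Field K] [AddCommGroup V]
    [Module K V] [FiniteDimensional K V] (P : Submodule K V) {k : ℕ} (φ : Fin k → V →ₗ[K] K)
    (hk : k < finrank K P) : ∃ v ∈ P, v ≠ 0 ∧ ∀ i, φ i v = 0 := by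
  let Φ : P →ₗ[K] Fin k → K := LinearMap.pi fun i => (φ i).comp P.subtype
  obtain ⟨v, hv, hv0⟩ := exists_mem_ne_zero_of_ne_bot
    (LinearMap.ker_ne_bot_of_finrank_lt (f := Φ) (by simpa using hk))
  exact ⟨v, v.2, by simpa using hv0, fun i => congr_fun hv i⟩

section

variable {V : Type*} [AddCommGroup V] [Module ℝ V]

def momentCurve {m : ℕ} (g : Fin m → V) (t : ℝ) : V :=
  ∑ i : Fin m, t ^ (i : ℕ) • g i

lemma momentCurve_zero {m : ℕ} (g : Fin (m + 1) → V) : momentCurve g 0 = g 0 := by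
  simp [momentCurve, Fin.sum_univ_succ]

lemma apply_momentCurve (φ : V →ₗ[ℝ] ℝ) {m : ℕ} (g : Fin m → V) (t : ℝ) :
    φ (momentCurve g t) = (∑ i, C (φ (g i)) * X ^ (i : ℕ)).eval t := by
  simp only [momentCurve, map_sum, map_smul, smul_eq_mul, eval_finsetSum, eval_mul, eval_C,
    eval_pow, eval_X]
  exact Finset.sum_congr rfl fun i _ => mul_comm _ _

lemma finite_setOf_apply_momentCurve_eq_zero (φ : V →ₗ[ℝ] ℝ) {m : ℕ} (g : Fin m → V)
    (hφ : ∃ i, φ (g i) ≠ 0) : {t | φ (momentCurve g t) = 0}.Finite := by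
  obtain ⟨i, hi⟩ := hφ
  have hcoeff : (∑ j, C (φ (g j)) * X ^ (j : ℕ)).coeff i = φ (g i) := by
    simp [finsetSum_coeff, coeff_C_mul, coeff_X_pow, Fin.val_eq_val]
  simp_rw [apply_momentCurve]
  exact finite_setOfPred_isRoot fun h => hi (by rw [← hcoeff, h, coeff_zero])

lemma continuous_apply_momentCurve_momentCurve (β : V →ₗ[ℝ] V →ₗ[ℝ] ℝ) {m : ℕ}
    (g : Fin m → V) : Continuous fun t => β (momentCurve g t) (momentCurve g t) := by
  simp only [momentCurve, map_sum, map_smul, LinearMap.sum_apply, LinearMap.smul_apply,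
    smul_eq_mul]
  fun_prop

lemma exists_mem_forall_apply_momentCurve_ne_zero {m : ℕ} (g : Fin m → V)
    {Φ : Set (V →ₗ[ℝ] ℝ)} (hΦ : Φ.Countable) (hg : ∀ φ ∈ Φ, ∃ i, φ (g i) ≠ 0) {U : Set ℝ}
    (hU : IsOpen U) (hU₀ : U.Nonempty) : ∃ t ∈ U, ∀ φ ∈ Φ, φ (momentCurve g t) ≠ 0 := by
  have hbad : (⋃ φ ∈ Φ, {t | φ (momentCurve g t) = 0}).Countable :=
    hΦ.biUnion fun φ hφ => (finite_setOf_apply_momentCurve_eq_zero φ g (hg φ hφ)).countable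
  obtain ⟨t, ht, htU⟩ := (hbad.dense_compl ℝ).exists_mem_open hU hU₀
  exact ⟨t, htU, fun φ hφ h => ht (Set.mem_biUnion hφ h)⟩

variable (q : V →ₗ[ℝ] V →ₗ[ℝ] ℝ)

lemma apply_sum_smul_sum_smul_of_isOrthoᵢ {ι : Type*} [Fintype ι] {f : ι → V}
    (hf : q.IsOrthoᵢ f) (c : ι → ℝ) :
    q (∑ i, c i • f i) (∑ i, c i • f i) = ∑ i, c i ^ 2 * q (f i) (f i) := by
  simp only [map_sum, map_smul, LinearMap.sum_apply, LinearMap.smul_apply, smul_eq_mul]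
  refine Finset.sum_congr rfl fun i _ => ?_
  rw [Finset.sum_eq_single i (fun j _ hji => by rw [hf hji, mul_zero]) (by simp)]
  ring

lemma pos_of_mem_span_of_isOrthoᵢ {ι : Type*} [Fintype ι] {f : ι → V} (hf : q.IsOrthoᵢ f)
    (hpos : ∀ i, 0 < q (f i) (f i)) {w : V} (hw : w ∈ span ℝ (Set.range f)) (hw0 : w ≠ 0) :
    0 < q w w := by
  obtain ⟨c, rfl⟩ := (mem_span_range_iff_exists_fun ℝ).mp hw
  obtain ⟨i, hi⟩ : ∃ i, c i ≠ 0 := by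
    by_contra! h
    simp [h] at hw0
  rw [apply_sum_smul_sum_smul_of_isOrthoᵢ q hf]
  exact Finset.sum_pos' (fun j _ => mul_nonneg (sq_nonneg _) (hpos j).le)
    ⟨i, Finset.mem_univ i, mul_pos (by positivity) (hpos i)⟩

lemma finrank_span_eq_card_and_pos_of_isOrthoᵢ {ι : Type*} [Fintype ι] {f : ι → V}
    (hf : q.IsOrthoᵢ f) (hpos : ∀ i, 0 < q (f i) (f i)) :
    finrank ℝ (span ℝ (Set.range f)) = Fintype.card ι ∧
      ∀ w ∈ span ℝ (Set.range f), w ≠ 0 → 0 < q w w :=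
  ⟨finrank_span_eq_card (q.linearIndependent_of_isOrthoᵢ hf (hpos · |>.ne')),
    fun _ => pos_of_mem_span_of_isOrthoᵢ q hf hpos⟩

lemma isOrthoᵢ_vecCons_three (hsymm : ∀ x y, q x y = q y x) {x u v : V} (hxu : q x u = 0)
    (hxv : q x v = 0) (huv : q u v = 0) : q.IsOrthoᵢ ![x, u, v] := by
  have hux : q u x = 0 := hsymm u x ▸ hxu
  have hvx : q v x = 0 := hsymm v x ▸ hxv
  have hvu : q v u = 0 := hsymm v u ▸ huv
  intro i j hij
  fin_cases i <;> fin_cases j <;> simp at hij ⊢ <;> assumption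

lemma IsSignature.separatingRight {p n : ℕ} (h : IsSignature q p n) : q.SeparatingRight := by
  obtain ⟨b, hb_orth, hb_pos, hb_neg⟩ := h
  exact LinearMap.IsOrthoᵢ.separatingRight_iff_not_isOrtho_basis_self b hb_orth
    (by rintro (i | j) <;> simp [hb_pos, hb_neg])

lemma IsSignature.exists_finrank_eq_pos {p n : ℕ} (h : IsSignature q p n) :
    ∃ P : Submodule ℝ V, finrank ℝ P = p ∧ ∀ w ∈ P, w ≠ 0 → 0 < q w w := by
  obtain ⟨b, hb_orth, hb_pos, -⟩ := h
  have he_orth : q.IsOrthoᵢ (b ∘ Sum.inl) := fun i j hij =>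
    hb_orth _ _ (Sum.inl_injective.ne hij)
  obtain ⟨hP, hPpos⟩ := finrank_span_eq_card_and_pos_of_isOrthoᵢ q he_orth (by simp [hb_pos])
  exact ⟨_, by simpa using hP, hPpos⟩

lemma exists_pos_forall_apply_ne_zero [FiniteDimensional ℝ V] (hq : q.SeparatingRight)
    {S : Set V} (hS : S.Countable) (hS0 : 0 ∉ S) {x h₀ : V} (hx : q x x ≠ 0)
    (hxh₀ : q x h₀ = 0) (hh₀ : 0 < q h₀ h₀) :
    ∃ u, q x u = 0 ∧ 0 < q u u ∧ ∀ z ∈ S, q x z = 0 → q u z ≠ 0 := by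
  let π : V →ₗ[ℝ] V := q x x • LinearMap.id - (q x).smulRight x
  have hxπ : ∀ y, q x (π y) = 0 := fun y => by simp [π]; ring
  have hπz : ∀ y z, q x z = 0 → q (π y) z = q x x * q y z := fun y z hxz => by simp [π, hxz]
  let b := finBasis ℝ V
  let g : Fin (finrank ℝ V + 1) → V := Fin.cons h₀ (π ∘ b)
  have hg : ∀ z ∈ S, q x z = 0 → ∃ i, q (g i) z ≠ 0 := by
    intro z hzS hxz
    by_contra! h
    have hz : q.flip z = 0 := b.ext fun j => by simpa [g, hπz _ _ hxz, hx] using h j.succ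
    exact hS0 ((hq z fun y => by simpa using LinearMap.congr_fun hz y) ▸ hzS)
  obtain ⟨t, ht, htS⟩ := exists_mem_forall_apply_momentCurve_ne_zero g
    (Φ := (fun z => q.flip z) '' {z ∈ S | q x z = 0}) ((hS.mono (Set.sep_subset _ _)).image _)
    (by rintro _ ⟨z, ⟨hz, hxz⟩, rfl⟩; exact hg z hz hxz)
    (isOpen_lt continuous_const (continuous_apply_momentCurve_momentCurve q g))
    ⟨0, show 0 < q (momentCurve g 0) (momentCurve g 0) by rwa [momentCurve_zero]⟩
  refine ⟨momentCurve g t, ?_, ht, fun z hz hxz => htS _ ⟨z, ⟨hz, hxz⟩, rfl⟩⟩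
  simp [momentCurve, g, Fin.sum_univ_succ, hxh₀, hxπ]

end

/-- Given a countable set `S` of negative vectors and a positive vector `x`, there is a
3-dimensional positive subspace `W` containing `x` which is not orthogonal to any `z ∈ S`. -/
theorem stmt4 {V : Type*} [AddCommGroup V] [Module ℝ V] [FiniteDimensional ℝ V]
    (q : V →ₗ[ℝ] V →ₗ[ℝ] ℝ) (hsymm : ∀ x y, q x y = q y x)
    (n : ℕ) (hsig : IsSignature q 3 n)
    (S : Set V) (hScount : S.Countable) (hSneg : ∀ z ∈ S, q z z < 0)
    (x : V) (hx : 0 < q x x) :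
    ∃ W : Submodule ℝ V, Module.finrank ℝ W = 3 ∧ x ∈ W ∧
      (∀ w ∈ W, w ≠ 0 → 0 < q w w) ∧
      ∀ z ∈ S, ∃ w ∈ W, q w z ≠ 0 := by
  obtain ⟨P, hP, hPpos⟩ := hsig.exists_finrank_eq_pos
  obtain ⟨h₀, h₀P, h₀ne, hxh₀⟩ := P.exists_mem_ne_zero_forall_eq_zero ![q x] (by omega)
  obtain ⟨u, hxu, hu, huS⟩ := exists_pos_forall_apply_ne_zero q hsig.separatingRight hScount
    (fun h => by simpa using hSneg 0 h) hx.ne' (hxh₀ 0) (hPpos h₀ h₀P h₀ne)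
  obtain ⟨v, hvP, hvne, hv⟩ := P.exists_mem_ne_zero_forall_eq_zero ![q x, q u] (by omega)
  have hpos : ∀ i, 0 < q (![x, u, v] i) (![x, u, v] i) := by
    simp [Fin.forall_fin_succ, hx, hu, hPpos v hvP hvne]
  obtain ⟨hW, hWpos⟩ := finrank_span_eq_card_and_pos_of_isOrthoᵢ q
    (isOrthoᵢ_vecCons_three q hsymm hxu (hv 0) (hv 1)) hpos
  refine ⟨span ℝ (Set.range ![x, u, v]), by simpa using hW, subset_span ⟨0, rfl⟩, hWpos,
    fun z hz => ?_⟩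
  by_cases hxz : q x z = 0
  · exact ⟨u, subset_span ⟨1, rfl⟩, huS z hz hxz⟩
  · exact ⟨x, subset_span ⟨0, rfl⟩, hxz⟩
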